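/- Let D be a finite directed graph whose minimum knot-free vertex deletion sets have some sink set containing vertex x. Then the minimum size of a knot-free vertex deletion set of D equals |N^+(x)| plus the minimum size of a knot-free vertex deletion set of D - R(x), where R(x) = N^+(x) ∪ R^-(x). -/

import Mathlib

open Relation Set

variable {V : Type*}

/-- Arcs of the induced subgraph of the digraph `A` after deleting the vertex set `S`. -/
def delArcs (A : V → V → Prop) (S : Set V) : V → V → Prop :=
  fun u v => u ∉ S ∧ v ∉ S ∧ A u v

/-- `K` is a knot of the digraph `A`: a strongly connected component of size at least 2
with no arc leaving it.  (A strongly connected set that is closed under out-arcs is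
automatically a maximal strongly connected set, i.e. a strongly connected component.) -/
def IsKnot (A : V → V → Prop) (K : Set V) : Prop :=
  2 ≤ K.ncard ∧ (∀ u ∈ K, ∀ v ∈ K, Relation.ReflTransGen A u v) ∧
    (∀ u ∈ K, ∀ v, A u v → v ∈ K)

/-- A digraph is knot-free if it contains no knot. -/
def KnotFree (A : V → V → Prop) : Prop := ¬ ∃ K : Set V, IsKnot A K

/-- `S` is a knot-free vertex deletion set of the digraph `A`. -/
def IsKFVDS (A : V → V → Prop) (S : Set V) : Prop := KnotFree (delArcs A S)

/-- `S` is an inclusion-wise minimal knot-free vertex deletion set. -/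
def MinimalKFVDS (A : V → V → Prop) (S : Set V) : Prop :=
  IsKFVDS A S ∧ ∀ S' : Set V, S' ⊂ S → ¬ IsKFVDS A S'

/-- `S` is a minimum-size knot-free vertex deletion set. -/
def MinimumKFVDS (A : V → V → Prop) (S : Set V) : Prop :=
  IsKFVDS A S ∧ ∀ S' : Set V, IsKFVDS A S' → S.ncard ≤ S'.ncard

/-- `v` is a sink of the induced subgraph `D - S`. -/
def IsSinkIn (A : V → V → Prop) (S : Set V) (v : V) : Prop :=
  v ∉ S ∧ ∀ w, ¬ delArcs A S v w

/-- The set of sinks of `D - S`. -/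
def sinksIn (A : V → V → Prop) (S : Set V) : Set V := {v | IsSinkIn A S v}

/-- `N^+(x)`, the out-neighborhood of `x`. -/
def outNbrs (A : V → V → Prop) (x : V) : Set V := {v | A x v}

/-- `R^-(x)` : the set of vertices (including `x`) with a directed path to `x`
in `D - N^+(x)`. -/
def RminusSet (A : V → V → Prop) (x : V) : Set V :=
  {u | Relation.ReflTransGen (delArcs A (outNbrs A x)) u x}

/-- `R(x) = N^+(x) ∪ R^-(x)`. -/
def Rset (A : V → V → Prop) (x : V) : Set V := outNbrs A x ∪ RminusSet A x

/-- Every vertex of a knot has an out-arc. -/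
lemma knot_out_arc {A : V → V → Prop} {K : Set V} (hK : IsKnot A K) {u : V} (hu : u ∈ K) :
    ∃ v, A u v := by
  obtain ⟨hcard, hconn, -⟩ := hK
  obtain ⟨w, hw, hwu⟩ := Set.exists_ne_of_one_lt_ncard (s := K) hcard u
  rcases (hconn u hu w hw).cases_head with h | ⟨c, hc, -⟩
  · exact absurd h.symm hwu
  · exact ⟨c, hc⟩

/-- A knot cannot contain a vertex with no out-arcs. -/
lemma knot_no_sink {A : V → V → Prop} {K : Set V} {x : V} (hK : IsKnot A K) (hx : x ∈ K)
    (hsink : ∀ v, ¬ A x v) : False := by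
  obtain ⟨v, hv⟩ := knot_out_arc hK hx
  exact hsink v hv

/-- Deleting the whole vertex set is always a KFVDS. -/
lemma isKFVDS_univ (A : V → V → Prop) : IsKFVDS A univ := by
  rintro ⟨K, hK⟩
  obtain ⟨w, hw⟩ : K.Nonempty := Set.nonempty_of_ncard_ne_zero (by have := hK.1; omega)
  obtain ⟨v, hv⟩ := knot_out_arc hK hw
  exact hv.1 (mem_univ _)

lemma delArcs_delArcs (A : V → V → Prop) (R S : Set V) :
    delArcs (delArcs A R) S = delArcs A (R ∪ S) := by
  funext u v
  simp only [delArcs, mem_union, eq_iff_iff]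
  tauto

lemma delArcs_congr {A : V → V → Prop} {S T : Set V} (h : S = T) :
    delArcs A S = delArcs A T := by rw [h]

/-- Transfer a `ReflTransGen` path along a closure property of `K`. -/
lemma rtg_transfer {A₁ A₂ : V → V → Prop} {K : Set V}
    (h : ∀ a ∈ K, ∀ b, A₁ a b → b ∈ K ∧ A₂ a b) {u v : V} (hu : u ∈ K)
    (huv : ReflTransGen A₁ u v) : v ∈ K ∧ ReflTransGen A₂ u v := by
  induction huv with
  | refl => exact ⟨hu, .refl⟩
  | tail _ hbc ih =>
    obtain ⟨hbK, p⟩ := ih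
    obtain ⟨hcK, a2⟩ := h _ hbK _ hbc
    exact ⟨hcK, p.tail a2⟩

/-- A path to `x` in `D - N⁺(x)` survives further deletion of a set disjoint from
`R⁻(x)`. -/
lemma rtg_Rminus {A : V → V → Prop} {x : V} {S' : Set V}
    (hd : ∀ u ∈ RminusSet A x, u ∉ S') {u : V}
    (hu : ReflTransGen (delArcs A (outNbrs A x)) u x) :
    ReflTransGen (delArcs A (outNbrs A x ∪ S')) u x := by
  induction hu using Relation.ReflTransGen.head_induction_on with
  | refl => exact .refl
  | head harc hpath ih =>
    rename_i a c
    refine ReflTransGen.head ⟨?_, ?_, harc.2.2⟩ ih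
    · simp only [mem_union, not_or]
      exact ⟨harc.1, hd a (ReflTransGen.head harc hpath)⟩
    · simp only [mem_union, not_or]
      exact ⟨harc.2.1, hd c hpath⟩

/-- Core lemma for the `≤` direction: if `S'` is disjoint from `R(x)` and
`D - (R(x) ∪ S')` is knot-free, then `N⁺(x) ∪ S'` is a KFVDS of `D`. -/
lemma core_le {A : V → V → Prop} {x : V} {S' : Set V}
    (hd : ∀ u ∈ Rset A x, u ∉ S')
    (hS' : KnotFree (delArcs A (Rset A x ∪ S'))) :
    IsKFVDS A (outNbrs A x ∪ S') := by
  rintro ⟨K, hK⟩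
  obtain ⟨hcard, hconn, hclosed⟩ := hK
  by_cases hKR : ∃ u ∈ K, u ∈ Rset A x
  · -- some vertex of K is in R(x); then it is in R⁻(x), and its path to x lies in
    -- D - (N⁺ ∪ S'), so x ∈ K; but x is a sink there.
    obtain ⟨u, huK, huR⟩ := hKR
    obtain ⟨v, hv⟩ := knot_out_arc ⟨hcard, hconn, hclosed⟩ huK
    have huN : u ∉ outNbrs A x ∪ S' := hv.1
    have huRm : u ∈ RminusSet A x := by
      rcases huR with h | h
      · exact absurd (Or.inl h : u ∈ outNbrs A x ∪ S') huN
      · exact h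
    have hpath : ReflTransGen (delArcs A (outNbrs A x ∪ S')) u x :=
      rtg_Rminus (fun a ha => hd a (Or.inr ha)) huRm
    have hxK : x ∈ K :=
      (rtg_transfer (fun a ha b hb => ⟨hclosed a ha b hb, hb⟩) huK hpath).1
    refine knot_no_sink ⟨hcard, hconn, hclosed⟩ hxK (fun v hv => ?_)
    exact hv.2.1 (Or.inl hv.2.2)
  · -- K avoids R(x): it is a knot of D - (R(x) ∪ S').
    push_neg at hKR
    refine hS' ⟨K, by omega, ?_, ?_⟩
    · intro u hu v hv
      have := rtg_transfer (A₂ := delArcs A (Rset A x ∪ S'))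
        (fun a ha b hb => ⟨hclosed a ha b hb, ?_⟩) hu (hconn u hu v hv)
      · exact this.2
      · have haR := hKR a ha
        have hbR := hKR b (hclosed a ha b hb)
        simp only [delArcs, mem_union, not_or] at hb ⊢
        exact ⟨⟨haR, hb.1.2⟩, ⟨hbR, hb.2.1.2⟩, hb.2.2⟩
    · intro u hu v hv
      refine hclosed u hu v ⟨?_, ?_, hv.2.2⟩
      · have := hv.1; simp only [mem_union, not_or] at this ⊢
        exact ⟨fun hN => this.1 (Or.inl hN), this.2⟩
      · have := hv.2.1; simp only [mem_union, not_or] at this ⊢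
        exact ⟨fun hN => this.1 (Or.inl hN), this.2⟩

/-- Core lemma for the `≥` direction: if `S` is a KFVDS containing `N⁺(x)`, then
`R(x) ∪ S` is also a KFVDS. -/
lemma core_ge {A : V → V → Prop} {x : V} {S : Set V}
    (hS : IsKFVDS A S) (hN : outNbrs A x ⊆ S) :
    KnotFree (delArcs A (Rset A x ∪ S)) := by
  rintro ⟨K, hK⟩
  obtain ⟨hcard, hconn, hclosed⟩ := hK
  -- every vertex of K has an out-arc, hence lies outside R(x) ∪ S
  have hKout : ∀ u ∈ K, u ∉ Rset A x ∪ S := by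
    intro u hu
    obtain ⟨v, hv⟩ := knot_out_arc ⟨hcard, hconn, hclosed⟩ hu
    exact hv.1
  refine hS ⟨K, hcard, ?_, ?_⟩
  · intro u hu v hv
    exact ReflTransGen.mono (r := delArcs A (Rset A x ∪ S)) (p := delArcs A S)
      (fun a b hab => ⟨fun h => hab.1 (Or.inr h),
      fun h => hab.2.1 (Or.inr h), hab.2.2⟩) u v (hconn u hu v hv)
  · intro u hu v hv
    have huRS := hKout u hu
    simp only [mem_union, not_or] at huRS
    have hvN : v ∉ outNbrs A x := fun hvN => hv.2.1 (hN hvN)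
    have hvR : v ∉ Rset A x := by
      rintro (h | h)
      · exact hvN h
      · -- v ∈ R⁻(x): then u ∈ R⁻(x) via the arc u → v, contradiction
        have huN : u ∉ outNbrs A x := fun hN => huRS.1 (Or.inl hN)
        have : ReflTransGen (delArcs A (outNbrs A x)) u x :=
          ReflTransGen.head ⟨huN, hvN, hv.2.2⟩ h
        exact huRS.1 (Or.inr this)
    refine hclosed u hu v ⟨?_, ?_, hv.2.2⟩
    · simp only [mem_union, not_or]; exact huRS
    · simp only [mem_union, not_or]; exact ⟨hvR, hv.2.1⟩

/-- If some minimum knot-free vertex deletion set `S_opt` of `D` has `x`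
as a sink of `D - S_opt`, then the minimum size of a knot-free vertex deletion set of
`D` equals `|N^+(x)|` plus the minimum size of one of `D - R(x)`. -/
theorem stmt10 [Fintype V] (A : V → V → Prop) (x : V)
    (h : ∃ S : Set V, MinimumKFVDS A S ∧ x ∈ sinksIn A S) :
    sInf {n : ℕ | ∃ S : Set V, IsKFVDS A S ∧ S.ncard = n} =
      (outNbrs A x).ncard +
        sInf {n : ℕ | ∃ S : Set V, IsKFVDS (delArcs A (Rset A x)) S ∧ S.ncard = n} := by
  classical
  set P₁ : Set ℕ := {n : ℕ | ∃ S : Set V, IsKFVDS A S ∧ S.ncard = n} with hP₁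
  set P₂ : Set ℕ := {n : ℕ | ∃ S : Set V, IsKFVDS (delArcs A (Rset A x)) S ∧ S.ncard = n}
    with hP₂
  have hne₁ : P₁.Nonempty := ⟨(univ : Set V).ncard, univ, isKFVDS_univ A, rfl⟩
  have hne₂ : P₂.Nonempty := ⟨(univ : Set V).ncard, univ, isKFVDS_univ _, rfl⟩
  -- a key rewriting: for any T, IsKFVDS (delArcs A R) T ↔ KnotFree (delArcs A (R ∪ T))
  have hkey : ∀ T : Set V, IsKFVDS (delArcs A (Rset A x)) T ↔
      KnotFree (delArcs A (Rset A x ∪ T)) := by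
    intro T
    unfold IsKFVDS
    rw [delArcs_delArcs]
  apply le_antisymm
  · -- ≤ : take an optimal S' for the reduced digraph
    obtain ⟨S', hS', hcard'⟩ := Nat.sInf_mem hne₂
    set T : Set V := S' \ Rset A x with hT
    have hTR : Rset A x ∪ T = Rset A x ∪ S' := by
      simp [hT, Set.union_diff_self]
    have hTkf : KnotFree (delArcs A (Rset A x ∪ T)) := by
      rw [hTR]; exact (hkey S').mp hS'
    have hkf : IsKFVDS A (outNbrs A x ∪ T) :=
      core_le (fun u hu huT => huT.2 hu) hTkf
    calc sInf P₁ ≤ (outNbrs A x ∪ T).ncard := Nat.sInf_le ⟨_, hkf, rfl⟩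
      _ ≤ (outNbrs A x).ncard + T.ncard := Set.ncard_union_le _ _
      _ ≤ (outNbrs A x).ncard + sInf P₂ := by
          gcongr
          rw [← hcard']
          exact Set.ncard_le_ncard (Set.diff_subset) (Set.toFinite _)
  · -- ≥ : use the hypothesis S_opt
    obtain ⟨S, ⟨hSkf, hSmin⟩, hxS, hsink⟩ := h
    have hN : outNbrs A x ⊆ S := by
      intro w hw
      by_contra hwS
      exact hsink w ⟨hxS, hwS, hw⟩
    have hkf2 : IsKFVDS (delArcs A (Rset A x)) (S \ Rset A x) := by
      rw [hkey]
      have : Rset A x ∪ S \ Rset A x = Rset A x ∪ S := by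
        simp [Set.union_diff_self]
      rw [this]
      exact core_ge hSkf hN
    have h1 : sInf P₂ ≤ (S \ Rset A x).ncard := Nat.sInf_le ⟨_, hkf2, rfl⟩
    have h2 : (outNbrs A x).ncard ≤ (S ∩ Rset A x).ncard :=
      Set.ncard_le_ncard (fun w hw => ⟨hN hw, Or.inl hw⟩) (Set.toFinite _)
    have h3 : (S ∩ Rset A x).ncard + (S \ Rset A x).ncard = S.ncard :=
      Set.ncard_inter_add_ncard_diff_eq_ncard S (Rset A x) (Set.toFinite _)
    have h4 : S.ncard ≤ sInf P₁ := by
      apply le_csInf hne₁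
      rintro n ⟨S', hS', rfl⟩
      exact hSmin S' hS'
    omega
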